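/- Every period eventually stabilizes: for any u ∈ Σ* and v ∈ Σ⁺, there exists i > 0 such that v^i is stable with respect to u (i.e., for all j > 0, col_u(v^i) = col_u((v^i)^j)). Moreover, if v is u-invariant then v^i is u-reliable. -/

import Mathlib

open scoped Classical

/-- Concatenation of a finite word with an infinite word. -/
def wcat {A : Type} (u : List A) (w : ℕ → A) : ℕ → A :=
  fun n => if h : n < u.length then u.get ⟨n, h⟩ else w (n - u.length)

/-- The infinite periodic word `v^ω`. -/
def wpow {A : Type} [Inhabited A] (v : List A) : ℕ → A :=
  fun n => v.getD (n % v.length) default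

/-- The ultimately periodic word `u · v^ω`. -/
def upw {A : Type} [Inhabited A] (u v : List A) : ℕ → A := wcat u (wpow v)

/-- The finite word `v^i`. -/
def wrep {A : Type} (v : List A) (i : ℕ) : List A := (List.replicate i v).flatten

/-- The right congruence `x ∼_L y`. -/
def simL {A : Type} (L : Set (ℕ → A)) (x y : List A) : Prop :=
  ∀ w : ℕ → A, wcat x w ∈ L ↔ wcat y w ∈ L

/-- `w` is `u`-invariant: `u ∼_L u·w`. -/
def UInv {A : Type} (L : Set (ℕ → A)) (u w : List A) : Prop := simL L u (u ++ w)

/-- `v` is relevant to `u`. -/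
def URel {A : Type} (L : Set (ℕ → A)) (u v : List A) : Prop :=
  ∃ z : List A, UInv L u (v ++ z)

/-- `v` has natural color at most `c` wrt `u`. -/
def ColorAtMost {A : Type} [Inhabited A] (L : Set (ℕ → A)) (u : List A) :
    ℕ → List A → Prop
  | c, v => ∀ z : List A, UInv L u (v ++ z) →
      ((upw u (v ++ z) ∈ L ↔ Even c) ∨
        ∃ i : ℕ, 0 < i ∧ ∃ c' : Fin c, ColorAtMost L u c' (wrep (v ++ z) i))
  termination_by c => c
  decreasing_by exact c'.isLt

/-- The natural color of the finite word `v` wrt `u`: `⊥` (i.e. `-∞`) if `v` is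
irrelevant to `u`, and otherwise the minimal `c ≥ 0` as in the paper. -/
noncomputable def ncol {A : Type} [Inhabited A] (L : Set (ℕ → A)) (u v : List A) :
    WithBot ℕ :=
  if URel L u v then ((sInf {c : ℕ | ColorAtMost L u c v} : ℕ) : WithBot ℕ) else ⊥

/-- `v` is stable wrt `u`. -/
def Stable {A : Type} [Inhabited A] (L : Set (ℕ → A)) (u v : List A) : Prop :=
  ∀ i : ℕ, 0 < i → ncol L u v = ncol L u (wrep v i)

/-- `v` is `u`-reliable. -/
def UReliable {A : Type} [Inhabited A] (L : Set (ℕ → A)) (u v : List A) : Prop :=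
  UInv L u v ∧ Stable L u v

/-- The natural color of an ultimately periodic infinite word. -/
noncomputable def icol {A : Type} [Inhabited A] (L : Set (ℕ → A)) (w : ℕ → A) : ℕ :=
  sInf {c : ℕ | ∃ u v : List A, v ≠ [] ∧ w = upw u v ∧ UInv L u v ∧
    ncol L u v = (c : WithBot ℕ)}

/-- The set of states visited infinitely often by a run. -/
def infSet {Q : Type} (r : ℕ → Q) : Set Q := {q | ∀ n : ℕ, ∃ m : ℕ, n ≤ m ∧ r m = q}

/-- The run of a complete deterministic automaton on an infinite word. -/
def runOf {A Q : Type} (δ : Q → A → Q) (q0 : Q) (w : ℕ → A) : ℕ → Q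
  | 0 => q0
  | n + 1 => δ (runOf δ q0 w n) (w n)

/-- `L` is ω-regular: recognized by some deterministic Muller automaton. -/
def OmegaRegular {A : Type} (L : Set (ℕ → A)) : Prop :=
  ∃ (Q : Type) (_ : Fintype Q) (q0 : Q) (δ : Q → A → Q) (α : Set (Set Q)),
    ∀ w : ℕ → A, w ∈ L ↔ infSet (runOf δ q0 w) ∈ α

/-!
Extend the natural color to a value in `WithTop (WithBot ℕ)`, with `⊤` for a relevant word that
admits no color bound, so that it is never a junk value. Since `v` is a prefix of `(v^i)^j`, every
color bound of `v^i` is one of `(v^i)^j`, so this extended color can only decrease along powers.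
Choosing `i` to minimise it over all powers of `v` (possible since the order is well-founded) makes
it constant on the powers of `v^i`, and so is the natural color, which is read off from it.
-/

theorem wcat_append {A : Type} (x y : List A) (w : ℕ → A) :
    wcat (x ++ y) w = wcat x (wcat y w) := by
  funext n
  simp only [wcat, List.length_append, List.get_eq_getElem]
  split_ifs <;> try omega
  · exact List.getElem_append_left _
  · rw [List.getElem_append_right (by omega)]
  · congr 1; omega

theorem wrep_succ {A : Type} (v : List A) (i : ℕ) : wrep v (i + 1) = v ++ wrep v i := by
  simp [wrep, List.replicate_succ]

theorem wrep_add {A : Type} (v : List A) (a b : ℕ) :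
    wrep v (a + b) = wrep v a ++ wrep v b := by
  rw [wrep, wrep, wrep, List.replicate_add, List.flatten_append]

theorem wrep_mul {A : Type} (v : List A) (a b : ℕ) :
    wrep v (a * b) = wrep (wrep v a) b := by
  induction b with
  | zero => simp [wrep]
  | succ n ih => rw [Nat.mul_succ, Nat.add_comm, wrep_add, wrep_succ, ih]

theorem prefix_wrep {A : Type} (v : List A) {i : ℕ} (hi : 0 < i) : v <+: wrep v i := by
  obtain ⟨k, rfl⟩ := Nat.exists_eq_add_of_lt hi
  exact ⟨wrep v k, by rw [Nat.zero_add, wrep_succ]⟩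

theorem UInv.wrep {A : Type} {L : Set (ℕ → A)} {u v : List A} (h : UInv L u v) (i : ℕ) :
    UInv L u (wrep v i) := by
  induction i with
  | zero => simp [UInv, simL, _root_.wrep]
  | succ n ih =>
    intro w
    rw [wrep_succ, ← List.append_assoc, wcat_append (u ++ v), ← h, ← wcat_append]
    exact ih w

theorem URel.of_prefix {A : Type} {L : Set (ℕ → A)} {u v w : List A} (hvw : v <+: w)
    (h : URel L u w) : URel L u v := by
  obtain ⟨t, rfl⟩ := hvw
  obtain ⟨z, hz⟩ := h
  exact ⟨t ++ z, by rwa [← List.append_assoc]⟩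

theorem ColorAtMost.of_prefix {A : Type} [Inhabited A] {L : Set (ℕ → A)} {u v w : List A}
    {c : ℕ} (hvw : v <+: w) (h : ColorAtMost L u c v) : ColorAtMost L u c w := by
  obtain ⟨t, rfl⟩ := hvw
  rw [ColorAtMost] at h ⊢
  intro z hz
  rw [List.append_assoc] at hz ⊢
  exact h _ hz

section ExtendedColor

variable {A : Type} [Inhabited A] (L : Set (ℕ → A)) (u : List A)

noncomputable def ecol (w : List A) : WithTop (WithBot ℕ) :=
  if URel L u w then
    if {c : ℕ | ColorAtMost L u c w}.Nonempty then
      ((sInf {c : ℕ | ColorAtMost L u c w} : ℕ) : WithBot ℕ)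
    else ⊤
  else (⊥ : WithBot ℕ)

theorem ncol_eq_untopD_ecol (w : List A) :
    ncol L u w = (ecol L u w).untopD ((0 : ℕ) : WithBot ℕ) := by
  unfold ncol ecol
  split_ifs with hrel hne
  · rfl
  · rw [Set.not_nonempty_iff_eq_empty.mp hne, Nat.sInf_empty, WithTop.untopD_top]
  · rfl

theorem ecol_anti_of_prefix {v w : List A} (hvw : v <+: w) : ecol L u w ≤ ecol L u v := by
  unfold ecol
  by_cases hrel : URel L u w
  · have hsub : {c : ℕ | ColorAtMost L u c v} ⊆ {c : ℕ | ColorAtMost L u c w} :=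
      fun c hc => hc.of_prefix hvw
    by_cases hne : {c : ℕ | ColorAtMost L u c v}.Nonempty
    · rw [if_pos hrel, if_pos (hrel.of_prefix hvw), if_pos hne, if_pos (hne.mono hsub)]
      exact_mod_cast Nat.sInf_le (hsub (Nat.sInf_mem hne))
    · rw [if_pos (hrel.of_prefix hvw), if_neg hne]
      exact le_top
  · rw [if_neg hrel]
    split_ifs <;> simp

theorem exists_stable_wrep (v : List A) : ∃ i : ℕ, 0 < i ∧ Stable L u (wrep v i) := by
  let i : ℕ+ := Function.argmin fun n : ℕ+ => ecol L u (wrep v n)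
  refine ⟨i, i.pos, fun j hj => ?_⟩
  rw [ncol_eq_untopD_ecol, ncol_eq_untopD_ecol]
  congr 1
  refine le_antisymm ?_ (ecol_anti_of_prefix L u (prefix_wrep _ hj))
  rw [← wrep_mul]
  exact Function.argmin_le (fun n : ℕ+ => ecol L u (wrep v n)) ⟨i * j, Nat.mul_pos i.pos hj⟩

end ExtendedColor

theorem period_eventually_stabilizes_general {A : Type} [Inhabited A] (L : Set (ℕ → A))
    (u v : List A) :
    ∃ i : ℕ, 0 < i ∧ Stable L u (wrep v i) ∧
      (UInv L u v → UReliable L u (wrep v i)) := by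
  obtain ⟨i, hi, hstable⟩ := exists_stable_wrep L u v
  exact ⟨i, hi, hstable, fun hinv => ⟨hinv.wrep i, hstable⟩⟩

/-- every period eventually stabilizes; if moreover `v` is `u`-invariant
then the stabilized power is `u`-reliable. -/
theorem period_eventually_stabilizes {A : Type} [Inhabited A] (L : Set (ℕ → A))
    (hreg : OmegaRegular L) (u v : List A) (hv : v ≠ []) :
    ∃ i : ℕ, 0 < i ∧ Stable L u (wrep v i) ∧
      (UInv L u v → UReliable L u (wrep v i)) :=
  period_eventually_stabilizes_general L u v
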